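/- arXiv:2306.14604 — 5 statements merged into one kernel-verified Lean document; each statement's English description precedes it below -/
import Mathlib

section
/- On a separable metric space, every sequence of functionals E_n : X → ℝ ∪ {±∞} admits a subsequence that Γ-converges (to some limit functional). -/
open Filter Topology MeasureTheory Set Metric

/-- The Γ-liminf of a sequence of extended-real-valued functionals on a metric space. -/
noncomputable def gammaLiminf {X : Type*} [MetricSpace X] (E : ℕ → X → EReal) (x : X) : EReal :=
  ⨅ (u : ℕ → X) (_ : Tendsto u atTop (𝓝 x)), Filter.liminf (fun n => E n (u n)) atTop

/-- The Γ-limsup of a sequence of extended-real-valued functionals on a metric space. -/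
noncomputable def gammaLimsup {X : Type*} [MetricSpace X] (E : ℕ → X → EReal) (x : X) : EReal :=
  ⨅ (u : ℕ → X) (_ : Tendsto u atTop (𝓝 x)), Filter.limsup (fun n => E n (u n)) atTop

/-- Compactness of Γ-convergence: on a separable metric space, every sequence of functionals
admits a subsequence that Γ-converges to some limit functional. -/
theorem exists_subseq_gammaConverges {X : Type*} [MetricSpace X]
    [TopologicalSpace.SeparableSpace X] (E : ℕ → X → EReal) :
    ∃ φ : ℕ → ℕ, StrictMono φ ∧ ∃ L : X → EReal,
      gammaLiminf (fun k => E (φ k)) = L ∧ gammaLimsup (fun k => E (φ k)) = L := by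
  classical
  have _inst : SecondCountableTopology X :=
    UniformSpace.secondCountable_of_separable X
  -- Enumerate a countable basis of open sets (padded with ∅).
  obtain ⟨U, hUopen, hUrange⟩ : ∃ U : ℕ → Set X, (∀ i, IsOpen (U i)) ∧
      ∀ s ∈ TopologicalSpace.countableBasis X, ∃ i, U i = s := by
    obtain ⟨U, hU⟩ := (Set.Countable.insert ∅
      (TopologicalSpace.countable_countableBasis X)).exists_eq_range (insert_nonempty _ _)
    refine ⟨U, fun i => ?_, fun s hs => ?_⟩
    · have : U i ∈ insert ∅ (TopologicalSpace.countableBasis X) := hU ▸ mem_range_self i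
      rcases this with h | h
      · simp [h]
      · exact TopologicalSpace.isOpen_of_mem_countableBasis h
    · have : s ∈ range U := hU ▸ mem_insert_of_mem _ hs
      obtain ⟨i, hi⟩ := this
      exact ⟨i, hi⟩
  -- The sequence of infima over basis elements, as a sequence in the compact space ℕ → EReal.
  set m : ℕ → ℕ → EReal := fun n i => ⨅ y ∈ U i, E n y with hm
  obtain ⟨g, φ, hφ, hconv⟩ := SeqCompactSpace.tendsto_subseq m
  have hpt : ∀ i, Tendsto (fun k => m (φ k) i) atTop (𝓝 (g i)) := fun i =>
    tendsto_pi_nhds.mp hconv i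
  set L : X → EReal := fun x => ⨆ i, ⨆ _ : x ∈ U i, g i with hL
  -- Lower bound: L x ≤ Γ-liminf.
  have h1 : ∀ x, L x ≤ gammaLiminf (fun k => E (φ k)) x := by
    intro x
    refine le_iInf₂ fun u hu => ?_
    refine iSup₂_le fun i hx => ?_
    have hev : ∀ᶠ k in atTop, u k ∈ U i := hu ((hUopen i).mem_nhds hx)
    have hgi : g i = liminf (fun k => m (φ k) i) atTop := (hpt i).liminf_eq.symm
    rw [hgi]
    refine liminf_le_liminf ?_
    filter_upwards [hev] with k hk
    exact iInf₂_le (u k) hk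
  -- Upper bound: Γ-limsup ≤ L x, via a recovery sequence.
  have h2 : ∀ x, gammaLimsup (fun k => E (φ k)) x ≤ L x := by
    intro x
    refine le_of_forall_gt_imp_ge_of_dense fun c hc => ?_
    -- basis neighborhoods of x inside shrinking balls
    have hball : ∀ j : ℕ, ∃ i : ℕ, x ∈ U i ∧ U i ⊆ Metric.ball x (1 / (j + 1 : ℝ)) := by
      intro j
      have hx0 : (0 : ℝ) < 1 / (j + 1 : ℝ) := by positivity
      have hxb : x ∈ Metric.ball x (1 / (j + 1 : ℝ)) := Metric.mem_ball_self hx0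
      obtain ⟨v, hvB, hxv, hvs⟩ :=
        (TopologicalSpace.isBasis_countableBasis X).exists_subset_of_mem_open
          hxb Metric.isOpen_ball
      obtain ⟨i, hi⟩ := hUrange v hvB
      exact ⟨i, hi ▸ hxv, hi ▸ hvs⟩
    choose I hIx hIball using hball
    have hg : ∀ j, g (I j) < c := fun j =>
      lt_of_le_of_lt (le_iSup₂ (f := fun i (_ : x ∈ U i) => g i) (I j) (hIx j)) hc
    -- eventually the infimum over U (I j) is < c, so we can pick good points
    have hev : ∀ j, ∃ N, ∀ k ≥ N, ∃ y ∈ U (I j), E (φ k) y < c := by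
      intro j
      obtain ⟨N, hN⟩ := eventually_atTop.mp ((hpt (I j)).eventually_lt_const (hg j))
      refine ⟨N, fun k hk => ?_⟩
      have h' : (⨅ y ∈ U (I j), E (φ k) y) < c := hN k hk
      obtain ⟨y, hy⟩ := iInf_lt_iff.mp h'
      obtain ⟨hys, hlt⟩ := iInf_lt_iff.mp hy
      exact ⟨y, hys, hlt⟩
    choose N hN using hev
    have key : ∀ j k, ∃ y, N j ≤ k → y ∈ U (I j) ∧ E (φ k) y < c := by
      intro j k
      by_cases h : N j ≤ k
      · obtain ⟨y, hy1, hy2⟩ := hN j k h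
        exact ⟨y, fun _ => ⟨hy1, hy2⟩⟩
      · exact ⟨x, fun h' => absurd h' h⟩
    choose y hy using key
    -- a strictly increasing sequence of times dominating the N j
    set n : ℕ → ℕ := fun j => Nat.rec (N 0) (fun j' ih => max (ih + 1) (N (j' + 1))) j with hn
    have hmono : StrictMono n :=
      strictMono_nat_of_lt_succ fun j => lt_of_lt_of_le (Nat.lt_succ_self _) (le_max_left _ _)
    have hnN : ∀ j, N j ≤ n j := by
      intro j
      cases j with
      | zero => exact le_rfl
      | succ j' => exact le_max_right _ _
    set J : ℕ → ℕ := fun k => Nat.findGreatest (fun j => n j ≤ k) k with hJ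
    set u : ℕ → X := fun k => if n 0 ≤ k then y (J k) k else x with hu
    have hJle : ∀ k, n 0 ≤ k → n (J k) ≤ k := fun k hk =>
      Nat.findGreatest_spec (P := fun j => n j ≤ k) (Nat.zero_le k) hk
    have hJge : ∀ j k, n j ≤ k → j ≤ J k := fun j k h =>
      Nat.le_findGreatest (le_trans (hmono.le_apply) h) h
    have hugood : ∀ k, n 0 ≤ k → u k ∈ U (I (J k)) ∧ E (φ k) (u k) < c := by
      intro k hk
      have hNk : N (J k) ≤ k := le_trans (hnN _) (hJle k hk)
      have := hy (J k) k hNk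
      simpa [hu, if_pos hk] using this
    have hutend : Tendsto u atTop (𝓝 x) := by
      rw [Metric.tendsto_atTop]
      intro ε hε
      obtain ⟨j, hj⟩ := exists_nat_one_div_lt hε
      refine ⟨n j, fun k hk => ?_⟩
      have hk0 : n 0 ≤ k := le_trans (hmono.monotone (Nat.zero_le j)) hk
      have hmem : u k ∈ Metric.ball x (1 / (J k + 1 : ℝ)) :=
        hIball (J k) (hugood k hk0).1
      have hjJ : j ≤ J k := hJge j k hk
      have hle : (1 / (J k + 1 : ℝ)) ≤ 1 / (j + 1 : ℝ) := by
        apply one_div_le_one_div_of_le (by positivity)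
        exact_mod_cast Nat.succ_le_succ hjJ
      calc dist (u k) x < 1 / (J k + 1 : ℝ) := Metric.mem_ball.mp hmem
        _ ≤ 1 / (j + 1 : ℝ) := hle
        _ < ε := hj
    have hlimsup : limsup (fun k => E (φ k) (u k)) atTop ≤ c := by
      apply limsup_le_of_le (by isBoundedDefault)
      rw [eventually_atTop]
      exact ⟨n 0, fun k hk => le_of_lt (hugood k hk).2⟩
    calc gammaLimsup (fun k => E (φ k)) x
        ≤ limsup (fun k => E (φ k) (u k)) atTop :=
          iInf₂_le (f := fun v (_ : Tendsto v atTop (𝓝 x)) =>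
            limsup (fun k => E (φ k) (v k)) atTop) u hutend
      _ ≤ c := hlimsup
  have h3 : ∀ x, gammaLiminf (fun k => E (φ k)) x ≤ gammaLimsup (fun k => E (φ k)) x :=
    fun x => iInf₂_mono fun u _ => liminf_le_limsup
  refine ⟨φ, hφ, L, funext fun x => ?_, funext fun x => ?_⟩
  · exact le_antisymm ((h3 x).trans (h2 x)) (h1 x)
  · exact le_antisymm (h2 x) ((h1 x).trans (h3 x))
end

section
/- For a curve γ : [0,1] → X in a metric space that is absolutely continuous (i.e., d(γ_t, γ_s) ≤ ∫_t^s f(r) dr for some f ∈ L¹([0,1])), the metric speed |γ̇_t| := lim_{h→0} d(γ_{t+h}, γ_t)/|h| exists for a.e. t ∈ [0,1], and it is the a.e.-minimal admissible f in the defining inequality. -/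
/-!
Each distance function `t ↦ d(γ_t, x)` is dominated by the primitive of `f`, hence absolutely
continuous with `|d/dt d(γ_t, x)| ≤ f t` almost everywhere. Take the supremum `m` of these
derivatives over a countable family of points `x` dense in `γ([a, b])`. Then `m ≤ f` is integrable,
and by the fundamental theorem of calculus and density,
`d(γ_t, γ_s) = sup_x |d(γ_t, x) - d(γ_s, x)| ≤ ∫_t^s m`, so `m` is admissible. At a Lebesgue point
of an admissible `g` the difference quotients `d(γ_{t+h}, γ_t) / |h|` are eventually below the
averages of `g`, which tend to `g t`, while each `|d/dt d(γ_t, x)|` bounds them from below. With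
`g = m` this gives the limit `m t`; with arbitrary `g` it gives `m ≤ g` almost everywhere.
-/

open Filter Topology MeasureTheory Set Metric

section

variable {X Y : Type*} [PseudoMetricSpace X] [PseudoMetricSpace Y] {a b : ℝ}

theorem AbsolutelyContinuousOnInterval.of_dist_le {F : ℝ → Y} {g : ℝ → X}
    (hF : AbsolutelyContinuousOnInterval F a b)
    (h : ∀ u ∈ uIcc a b, ∀ v ∈ uIcc a b, dist (g u) (g v) ≤ dist (F u) (F v)) :
    AbsolutelyContinuousOnInterval g a b := by
  refine squeeze_zero' (Eventually.of_forall fun _ => Finset.sum_nonneg fun _ _ => dist_nonneg)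
    ?_ hF
  filter_upwards [eventually_inf_principal.2 (Eventually.of_forall fun _ hE => hE)] with E hE
  exact Finset.sum_le_sum fun i hi => h _ (hE.1 i hi).1 _ (hE.1 i hi).2

theorem ContinuousOn.of_dist_le {F : ℝ → Y} {g : ℝ → X} {s : Set ℝ} (hF : ContinuousOn F s)
    (h : ∀ u ∈ s, ∀ v ∈ s, dist (g u) (g v) ≤ dist (F u) (F v)) : ContinuousOn g s := by
  intro t ht
  rw [ContinuousWithinAt, tendsto_iff_dist_tendsto_zero]
  refine squeeze_zero' (Eventually.of_forall fun _ => dist_nonneg) ?_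
    (tendsto_iff_dist_tendsto_zero.1 (hF t ht))
  filter_upwards [self_mem_nhdsWithin] with u hu using h u hu t ht

theorem dist_le_of_abs_dist_sub_le {ι : Type*} {x : ι → X} {p q : X} {c : ℝ}
    (hq : q ∈ closure (range x)) (h : ∀ i, |dist p (x i) - dist q (x i)| ≤ c) :
    dist p q ≤ c := by
  have hclosed : IsClosed {y | |dist p y - dist q y| ≤ c} :=
    isClosed_le (by fun_prop) continuous_const
  have := closure_minimal (forall_mem_range.2 h) hclosed hq
  simpa using this

theorem mem_closure_range_comp_projIcc {γ : ℝ → X} (hab : a ≤ b) (hγ : ContinuousOn γ (Icc a b))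
    {s : ℝ} (hs : s ∈ Icc a b) : γ s ∈ closure (range fun q : ℚ => γ (projIcc a b hab q)) := by
  have hc : Continuous fun r : ℝ => γ (projIcc a b hab r) :=
    hγ.comp_continuous (continuous_subtype_val.comp continuous_projIcc)
      fun r => (projIcc a b hab r).2
  have := map_mem_closure (t := range fun q : ℚ => γ (projIcc a b hab q)) hc
    (Rat.denseRange_cast s) (by rintro _ ⟨q, rfl⟩; exact ⟨q, rfl⟩)
  rwa [projIcc_of_mem hab hs] at this

theorem IntervalIntegrable.ae_tendsto_inv_mul_integral {g : ℝ → ℝ}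
    (hg : IntervalIntegrable g volume a b) :
    ∀ᵐ t, t ∈ Ioo a b →
      Tendsto (fun h => h⁻¹ * ∫ r in t..t + h, g r) (𝓝[≠] 0) (𝓝 (g t)) := by
  filter_upwards [hg.ae_hasDerivAt_integral] with t ht hIoo
  have hIcc : t ∈ uIcc a b := Icc_subset_uIcc (Ioo_subset_Icc_self hIoo)
  simpa using hasDerivAt_iff_tendsto_slope_zero.1 (ht hIcc t hIcc)

theorem ae_restrict_Icc_of_ae_Ioo {p : ℝ → Prop} (h : ∀ᵐ t, t ∈ Ioo a b → p t) :
    ∀ᵐ t ∂volume.restrict (Icc a b), p t := by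
  rwa [← Measure.restrict_congr_set Ioo_ae_eq_Icc, ae_restrict_iff' measurableSet_Ioo]

theorem eventually_add_mem_Icc {t : ℝ} (ht : t ∈ Ioo a b) : ∀ᶠ h in 𝓝[≠] (0 : ℝ), t + h ∈ Icc a b :=
  nhdsWithin_le_nhds <|
    ((continuous_const_add t).tendsto' 0 t (add_zero t)).eventually (Icc_mem_nhds ht.1 ht.2)

theorem abs_inv_mul_dist_sub_le (γ : ℝ → X) (x : X) (t h : ℝ) :
    |h⁻¹ * (dist (γ (t + h)) x - dist (γ t) x)| ≤ dist (γ (t + h)) (γ t) / |h| := by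
  rw [abs_mul, abs_inv, inv_mul_eq_div]
  gcongr
  exact abs_dist_sub_le _ _ _

def AdmissibleOn (γ : ℝ → X) (g : ℝ → ℝ) (a b : ℝ) : Prop :=
  ∀ t s : ℝ, t ∈ Icc a b → s ∈ Icc a b → t ≤ s → dist (γ t) (γ s) ≤ ∫ r in t..s, g r

/-- Where it is unbounded the supremum takes the junk value `0`; on `[a, b]` this
  happens only on a null set. -/
noncomputable def supAbsDerivDist {ι : Type*} (γ : ℝ → X) (x : ι → X) (t : ℝ) : ℝ :=
  ⨆ i, |deriv (fun s => dist (γ s) (x i)) t|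

theorem measurable_supAbsDerivDist {ι : Type*} [Countable ι] (γ : ℝ → X) (x : ι → X) :
    Measurable (supAbsDerivDist γ x) :=
  Measurable.iSup fun _ => (measurable_deriv _).abs

theorem supAbsDerivDist_nonneg {ι : Type*} (γ : ℝ → X) (x : ι → X) (t : ℝ) :
    0 ≤ supAbsDerivDist γ x t :=
  Real.iSup_nonneg fun _ => abs_nonneg _

section

variable {ι : Type*} {γ : ℝ → X} {x : ι → X} {t c : ℝ}

theorem supAbsDerivDist_le [Nonempty ι]
    (hc : ∀ i, |deriv (fun s => dist (γ s) (x i)) t| ≤ c) : supAbsDerivDist γ x t ≤ c :=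
  ciSup_le hc

theorem abs_deriv_dist_le_supAbsDerivDist
    (hc : ∀ i, |deriv (fun s => dist (γ s) (x i)) t| ≤ c) (i : ι) :
    |deriv (fun s => dist (γ s) (x i)) t| ≤ supAbsDerivDist γ x t :=
  le_ciSup (f := fun i => |deriv (fun s => dist (γ s) (x i)) t|) ⟨c, forall_mem_range.2 hc⟩ i

end

namespace AdmissibleOn

variable {γ : ℝ → X} {g : ℝ → ℝ}

theorem dist_le_dist_primitive (hg : IntervalIntegrable g volume a b) (h : AdmissibleOn γ g a b)
    {u v : ℝ} (hu : u ∈ Icc a b) (hv : v ∈ Icc a b) :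
    dist (γ u) (γ v) ≤ dist (∫ r in a..u, g r) (∫ r in a..v, g r) := by
  wlog huv : u ≤ v generalizing u v
  · rw [dist_comm, dist_comm (∫ r in a..u, g r)]
    exact this hv hu (le_of_not_ge huv)
  have hint {w : ℝ} (hw : w ∈ Icc a b) : IntervalIntegrable g volume a w :=
    hg.mono_set (uIcc_subset_uIcc left_mem_uIcc (Icc_subset_uIcc hw))
  calc dist (γ u) (γ v) ≤ ∫ r in u..v, g r := h u v hu hv huv
    _ = (∫ r in a..v, g r) - ∫ r in a..u, g r :=
      (intervalIntegral.integral_interval_sub_left (hint hv) (hint hu)).symm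
    _ ≤ dist (∫ r in a..u, g r) (∫ r in a..v, g r) := by
      rw [Real.dist_eq, abs_sub_comm]
      exact le_abs_self _

theorem continuousOn (hab : a ≤ b) (hg : IntervalIntegrable g volume a b)
    (h : AdmissibleOn γ g a b) : ContinuousOn γ (Icc a b) := by
  have hF := (hg.absolutelyContinuousOnInterval_intervalIntegral left_mem_uIcc).continuousOn
  rw [uIcc_of_le hab] at hF
  exact hF.of_dist_le fun u hu v hv => h.dist_le_dist_primitive hg hu hv

theorem absolutelyContinuousOnInterval_dist (hab : a ≤ b) (hg : IntervalIntegrable g volume a b)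
    (h : AdmissibleOn γ g a b) (x : X) :
    AbsolutelyContinuousOnInterval (fun t => dist (γ t) x) a b := by
  refine (hg.absolutelyContinuousOnInterval_intervalIntegral left_mem_uIcc).of_dist_le
    fun u hu v hv => ?_
  rw [uIcc_of_le hab] at hu hv
  exact (abs_dist_sub_le _ _ _).trans (h.dist_le_dist_primitive hg hu hv)

theorem dist_div_abs_le (h : AdmissibleOn γ g a b) {t δ : ℝ} (ht : t ∈ Icc a b)
    (htδ : t + δ ∈ Icc a b) : dist (γ (t + δ)) (γ t) / |δ| ≤ δ⁻¹ * ∫ r in t..t + δ, g r := by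
  rcases lt_trichotomy δ 0 with hneg | rfl | hpos
  · rw [abs_of_neg hneg, intervalIntegral.integral_symm, mul_neg, ← neg_mul, ← inv_neg,
      inv_mul_eq_div]
    exact div_le_div_of_nonneg_right (h _ _ htδ ht (by linarith)) (by linarith)
  · simp
  · rw [abs_of_pos hpos, inv_mul_eq_div, dist_comm]
    exact div_le_div_of_nonneg_right (h _ _ ht htδ (by linarith)) hpos.le

theorem eventually_dist_div_abs_le (h : AdmissibleOn γ g a b) {t : ℝ} (ht : t ∈ Ioo a b) :
    ∀ᶠ δ in 𝓝[≠] 0, dist (γ (t + δ)) (γ t) / |δ| ≤ δ⁻¹ * ∫ r in t..t + δ, g r :=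
  (eventually_add_mem_Icc ht).mono fun _ => h.dist_div_abs_le (Ioo_subset_Icc_self ht)

theorem abs_le_of_hasDerivAt (h : AdmissibleOn γ g a b) {t : ℝ} (ht : t ∈ Ioo a b)
    (hg : Tendsto (fun δ => δ⁻¹ * ∫ r in t..t + δ, g r) (𝓝[≠] 0) (𝓝 (g t)))
    {x : X} {d : ℝ} (hd : HasDerivAt (fun s => dist (γ s) x) d t) : |d| ≤ g t :=
  le_of_tendsto_of_tendsto (hasDerivAt_iff_tendsto_slope_zero.1 hd).abs hg <|
    (h.eventually_dist_div_abs_le ht).mono fun δ hδ =>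
      (abs_inv_mul_dist_sub_le γ x t δ).trans hδ

theorem ae_le_of_ae_tendsto (h : AdmissibleOn γ g a b) (hg : IntervalIntegrable g volume a b)
    {m : ℝ → ℝ} (hm : ∀ᵐ t, t ∈ Ioo a b →
      Tendsto (fun δ => dist (γ (t + δ)) (γ t) / |δ|) (𝓝[≠] 0) (𝓝 (m t))) :
    ∀ᵐ t, t ∈ Ioo a b → m t ≤ g t := by
  filter_upwards [hm, hg.ae_tendsto_inv_mul_integral] with t hmt hgt ht
  exact le_of_tendsto_of_tendsto (hmt ht) (hgt ht) (h.eventually_dist_div_abs_le ht)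

variable {ι : Type*} [Countable ι]

theorem ae_differentiableAt_dist_and_abs_deriv_le (hab : a ≤ b)
    (hg : IntervalIntegrable g volume a b) (h : AdmissibleOn γ g a b) (x : ι → X) :
    ∀ᵐ t, t ∈ Ioo a b → ∀ i, DifferentiableAt ℝ (fun s => dist (γ s) (x i)) t ∧
      |deriv (fun s => dist (γ s) (x i)) t| ≤ g t := by
  have hdiff : ∀ᵐ t, ∀ i, t ∈ uIcc a b → DifferentiableAt ℝ (fun s => dist (γ s) (x i)) t :=
    ae_all_iff.2 fun i => (h.absolutelyContinuousOnInterval_dist hab hg (x i)).ae_differentiableAt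
  filter_upwards [hdiff, hg.ae_tendsto_inv_mul_integral] with t hdt hlim ht i
  have hdi := hdt i (Icc_subset_uIcc (Ioo_subset_Icc_self ht))
  exact ⟨hdi, h.abs_le_of_hasDerivAt ht (hlim ht) hdi.hasDerivAt⟩

variable [Nonempty ι]

theorem integrableOn_supAbsDerivDist (hab : a ≤ b) (hg : IntervalIntegrable g volume a b)
    (h : AdmissibleOn γ g a b) (x : ι → X) : IntegrableOn (supAbsDerivDist γ x) (Icc a b) := by
  refine ((intervalIntegrable_iff_integrableOn_Icc_of_le hab).1 hg).mono'
    (measurable_supAbsDerivDist γ x).aestronglyMeasurable (ae_restrict_Icc_of_ae_Ioo ?_)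
  filter_upwards [h.ae_differentiableAt_dist_and_abs_deriv_le hab hg x] with t ht hIoo
  rw [Real.norm_of_nonneg (supAbsDerivDist_nonneg γ x t)]
  exact supAbsDerivDist_le fun i => (ht hIoo i).2

theorem admissibleOn_supAbsDerivDist (hab : a ≤ b) (hg : IntervalIntegrable g volume a b)
    (h : AdmissibleOn γ g a b) {x : ι → X} (hx : ∀ s ∈ Icc a b, γ s ∈ closure (range x)) :
    AdmissibleOn γ (supAbsDerivDist γ x) a b := by
  intro t s ht hs hts
  have hsub : uIcc t s ⊆ uIcc a b := by
    rw [uIcc_of_le hts, uIcc_of_le hab]; exact Icc_subset_Icc ht.1 hs.2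
  have hms : IntervalIntegrable (supAbsDerivDist γ x) volume t s :=
    ((h.integrableOn_supAbsDerivDist hab hg x).mono_set (uIcc_of_le hab ▸ hsub)).intervalIntegrable
  have hbound : ∀ᵐ r ∂volume.restrict (Icc t s),
      ∀ i, |deriv (fun s => dist (γ s) (x i)) r| ≤ supAbsDerivDist γ x r := by
    refine ae_restrict_of_ae_restrict_of_subset (Icc_subset_Icc ht.1 hs.2)
      (ae_restrict_Icc_of_ae_Ioo ?_)
    filter_upwards [h.ae_differentiableAt_dist_and_abs_deriv_le hab hg x] with r hr hIoo
    exact abs_deriv_dist_le_supAbsDerivDist fun i => (hr hIoo i).2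
  refine dist_le_of_abs_dist_sub_le (hx s hs) fun i => ?_
  have hφ := (h.absolutelyContinuousOnInterval_dist hab hg (x i)).mono hsub
  calc |dist (γ t) (x i) - dist (γ s) (x i)|
      = |∫ r in t..s, deriv (fun s => dist (γ s) (x i)) r| := by
        rw [hφ.integral_deriv_eq_sub, abs_sub_comm]
    _ ≤ ∫ r in t..s, |deriv (fun s => dist (γ s) (x i)) r| :=
        intervalIntegral.abs_integral_le_integral_abs hts
    _ ≤ ∫ r in t..s, supAbsDerivDist γ x r :=
        intervalIntegral.integral_mono_ae_restrict hts hφ.intervalIntegrable_deriv.abs hms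
          (hbound.mono fun r hr => hr i)

theorem ae_tendsto_supAbsDerivDist (hab : a ≤ b) (hg : IntervalIntegrable g volume a b)
    (h : AdmissibleOn γ g a b) {x : ι → X} (hx : ∀ s ∈ Icc a b, γ s ∈ closure (range x)) :
    ∀ᵐ t, t ∈ Ioo a b → Tendsto (fun δ => dist (γ (t + δ)) (γ t) / |δ|) (𝓝[≠] 0)
      (𝓝 (supAbsDerivDist γ x t)) := by
  have hms := h.admissibleOn_supAbsDerivDist hab hg hx
  have hms_int := (intervalIntegrable_iff_integrableOn_Icc_of_le hab).2
    (h.integrableOn_supAbsDerivDist hab hg x)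
  filter_upwards [h.ae_differentiableAt_dist_and_abs_deriv_le hab hg x,
    hms_int.ae_tendsto_inv_mul_integral] with t hdiff hlim ht
  refine tendsto_order.2 ⟨fun c hc => ?_, fun c hc => ?_⟩
  · obtain ⟨i, hi⟩ := exists_lt_of_lt_ciSup hc
    have hslope := (hasDerivAt_iff_tendsto_slope_zero.1 (hdiff ht i).1.hasDerivAt).abs
    filter_upwards [hslope.eventually (lt_mem_nhds hi)] with δ hδ
    exact hδ.trans_le (abs_inv_mul_dist_sub_le γ (x i) t δ)
  · filter_upwards [hms.eventually_dist_div_abs_le ht, (hlim ht).eventually (gt_mem_nhds hc)]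
      with δ h₁ h₂ using h₁.trans_lt h₂

end AdmissibleOn

end

/-- Existence of the metric speed: if `γ : [0,1] → X` is absolutely continuous, i.e.
`d(γ_t, γ_s) ≤ ∫_t^s f(r) dr` for some `f ∈ L¹([0,1])`, then for a.e. `t ∈ [0,1]` the limit
`|γ̇_t| := lim_{h→0} d(γ_{t+h}, γ_t)/|h|` exists, it is admissible in the defining
inequality, and it is minimal (in the a.e. sense) among all admissible functions. -/
theorem exists_metricSpeed {X : Type*} [MetricSpace X] (γ : ℝ → X) (f : ℝ → ℝ)
    (hf : IntegrableOn f (Icc (0:ℝ) 1))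
    (hac : ∀ t s : ℝ, t ∈ Icc (0:ℝ) 1 → s ∈ Icc (0:ℝ) 1 → t ≤ s →
      dist (γ t) (γ s) ≤ ∫ r in t..s, f r) :
    ∃ ms : ℝ → ℝ,
      (∀ᵐ t ∂(volume.restrict (Icc (0:ℝ) 1)),
        Tendsto (fun h : ℝ => dist (γ (t + h)) (γ t) / |h|) (𝓝[≠] 0) (𝓝 (ms t))) ∧
      IntegrableOn ms (Icc (0:ℝ) 1) ∧
      (∀ t s : ℝ, t ∈ Icc (0:ℝ) 1 → s ∈ Icc (0:ℝ) 1 → t ≤ s →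
        dist (γ t) (γ s) ≤ ∫ r in t..s, ms r) ∧
      (∀ g : ℝ → ℝ, IntegrableOn g (Icc (0:ℝ) 1) →
        (∀ t s : ℝ, t ∈ Icc (0:ℝ) 1 → s ∈ Icc (0:ℝ) 1 → t ≤ s →
          dist (γ t) (γ s) ≤ ∫ r in t..s, g r) →
        ∀ᵐ t ∂(volume.restrict (Icc (0:ℝ) 1)), ms t ≤ g t) := by
  have hab : (0 : ℝ) ≤ 1 := zero_le_one
  have hL1 {g : ℝ → ℝ} : IntegrableOn g (Icc 0 1) → IntervalIntegrable g volume 0 1 :=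
    (intervalIntegrable_iff_integrableOn_Icc_of_le hab).2
  have hadm : AdmissibleOn γ f 0 1 := hac
  have hx (s : ℝ) (hs : s ∈ Icc (0 : ℝ) 1) :
      γ s ∈ closure (range fun q : ℚ => γ (projIcc 0 1 hab q)) :=
    mem_closure_range_comp_projIcc hab (hadm.continuousOn hab (hL1 hf)) hs
  have hlim := hadm.ae_tendsto_supAbsDerivDist hab (hL1 hf) hx
  refine ⟨supAbsDerivDist γ _, ae_restrict_Icc_of_ae_Ioo hlim,
    hadm.integrableOn_supAbsDerivDist hab (hL1 hf) _,
    hadm.admissibleOn_supAbsDerivDist hab (hL1 hf) hx, fun g hg hgadm => ?_⟩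
  exact ae_restrict_Icc_of_ae_Ioo (AdmissibleOn.ae_le_of_ae_tendsto hgadm (hL1 hg) hlim)
end

section
/- Let m_n ⇀ m_∞ be weakly converging Borel probability measures on a complete separable metric space Y. Then for every C > 0, the union over n of the entropy sublevel sets {μ ∈ P(Y) : Ent_{m_n}(μ) ≤ C} is a tight family of probability measures. -/
open Filter Topology MeasureTheory Set Metric
open scoped ENNReal NNReal

open Classical in
/-- The Boltzmann–Shannon relative entropy `Ent_m(μ) = ∫ ρ log ρ dm` if `μ = ρ m ≪ m`,
and `+∞` otherwise. -/
noncomputable def relEntropy {X : Type*} [MeasurableSpace X] (m μ : Measure X) : EReal :=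
  if μ ≪ m then
    ((∫⁻ x, ENNReal.ofReal ((μ.rnDeriv m x).toReal * Real.log (μ.rnDeriv m x).toReal) ∂m :
        ℝ≥0∞) : EReal)
      - ((∫⁻ x, ENNReal.ofReal (-((μ.rnDeriv m x).toReal * Real.log (μ.rnDeriv m x).toReal)) ∂m :
        ℝ≥0∞) : EReal)
  else ⊤


/-! For every `t ≥ 0`, integrating Young's inequality `t ρ ≤ ρ log ρ + eᵗ` over `E` against `m`
gives `t μ(E) ≤ Ent_m(μ) + 1 + eᵗ m(E)`, the `1` bounding the negative part of `ρ log ρ`.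
Taking `t` large, sets of small `m_n`-measure have uniformly small measure for every `μ` in the
sublevel sets, so tightness transfers from `{m_n}` to them. The sequence `m_n` is tight by the
converse Prokhorov theorem: with its limit it forms a compact set of probability measures. -/

namespace Real

lemma mul_le_mul_log_add_exp {x : ℝ} (hx : 0 ≤ x) (t : ℝ) : t * x ≤ x * log x + exp t := by
  rcases hx.eq_or_lt with rfl | hx
  · simp [(exp_pos t).le]
  have h := log_le_sub_one_of_pos (div_pos (exp_pos t) hx)
  rw [log_div (exp_ne_zero t) hx.ne', log_exp, le_sub_iff_add_le, le_div_iff₀ hx] at h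
  nlinarith

end Real

section RelEntropy

variable {X : Type*} [MeasurableSpace X] {m μ : Measure X} {C : ℝ}

noncomputable def relEntropyPosPart (m μ : Measure X) : ℝ≥0∞ :=
  ∫⁻ x, ENNReal.ofReal ((μ.rnDeriv m x).toReal * Real.log (μ.rnDeriv m x).toReal) ∂m

lemma absolutelyContinuous_of_relEntropy_le (h : relEntropy m μ ≤ C) : μ ≪ m := by
  by_contra hac
  simp [relEntropy, hac] at h

lemma relEntropyPosPart_le_of_relEntropy_le [IsProbabilityMeasure m] (h : relEntropy m μ ≤ C) :
    relEntropyPosPart m μ ≤ ENNReal.ofReal (C + 1) := by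
  set N := ∫⁻ x, ENNReal.ofReal (-((μ.rnDeriv m x).toReal * Real.log (μ.rnDeriv m x).toReal)) ∂m
  have hN : (N : EReal) ≤ 1 := by
    have : N ≤ ∫⁻ _, 1 ∂m := lintegral_mono fun x => ENNReal.ofReal_le_one.mpr <| by
      linarith [Real.self_sub_one_le_mul_log (μ.rnDeriv m x).toReal_nonneg,
        (μ.rnDeriv m x).toReal_nonneg]
    exact_mod_cast this.trans_eq (by simp)
  have hPN : (relEntropyPosPart m μ : EReal) - N ≤ C := by
    rwa [relEntropy, if_pos (absolutelyContinuous_of_relEntropy_le h)] at h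
  rw [← EReal.coe_ennreal_le_coe_ennreal_iff, EReal.coe_ennreal_ofReal]
  calc (relEntropyPosPart m μ : EReal)
      ≤ C + N := (EReal.sub_le_iff_le_add (.inl (by simp))
        (.inl (hN.trans_lt (EReal.coe_lt_top 1)).ne)).mp hPN
    _ ≤ C + 1 := by gcongr
    _ = ((C + 1 : ℝ) : EReal) := rfl
    _ ≤ _ := by exact_mod_cast le_max_left _ _

lemma ofReal_mul_measure_le_relEntropyPosPart_add [SigmaFinite μ] [SigmaFinite m]
    (hac : μ ≪ m) {t : ℝ} (ht : 0 ≤ t) (E : Set X) :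
    ENNReal.ofReal t * μ E ≤ relEntropyPosPart m μ + ENNReal.ofReal (Real.exp t) * m E := by
  have young : ∀ᵐ x ∂m, ENNReal.ofReal t * μ.rnDeriv m x ≤
      ENNReal.ofReal ((μ.rnDeriv m x).toReal * Real.log (μ.rnDeriv m x).toReal) +
        ENNReal.ofReal (Real.exp t) := by
    filter_upwards [Measure.rnDeriv_lt_top μ m] with x hx
    conv_lhs => rw [← ENNReal.ofReal_toReal hx.ne, ← ENNReal.ofReal_mul ht]
    exact (ENNReal.ofReal_le_ofReal
      (Real.mul_le_mul_log_add_exp ENNReal.toReal_nonneg t)).trans ENNReal.ofReal_add_le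
  calc ENNReal.ofReal t * μ E = ∫⁻ x in E, ENNReal.ofReal t * μ.rnDeriv m x ∂m := by
        rw [lintegral_const_mul' _ _ ENNReal.ofReal_ne_top, Measure.setLIntegral_rnDeriv hac]
    _ ≤ ∫⁻ x in E, (ENNReal.ofReal ((μ.rnDeriv m x).toReal * Real.log (μ.rnDeriv m x).toReal) +
        ENNReal.ofReal (Real.exp t)) ∂m := lintegral_mono_ae (ae_restrict_of_ae young)
    _ ≤ _ := by
        rw [lintegral_add_right _ measurable_const, setLIntegral_const]
        gcongr
        exact setLIntegral_le_lintegral _ _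

/- With `t = 2 (C + 1) / ε`, the bound `t μ(E) ≤ (C + 1) + eᵗ m(E)` becomes `t μ(E) ≤ t ε`
as soon as `m(E) ≤ (C + 1) e⁻ᵗ`. -/
lemma measure_le_of_relEntropy_le [IsProbabilityMeasure m] [SigmaFinite μ]
    (h : relEntropy m μ ≤ C) (hC : 0 ≤ C) {ε : ℝ} (hε : 0 < ε) {E : Set X}
    (hE : m E ≤ ENNReal.ofReal ((C + 1) * Real.exp (-(2 * (C + 1) / ε)))) :
    μ E ≤ ENNReal.ofReal ε := by
  set t := 2 * (C + 1) / ε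
  have ht : 0 < t := by positivity
  have key : ENNReal.ofReal t * μ E ≤ ENNReal.ofReal t * ENNReal.ofReal ε := calc
    ENNReal.ofReal t * μ E ≤ ENNReal.ofReal (C + 1) + ENNReal.ofReal (Real.exp t) * m E :=
      (ofReal_mul_measure_le_relEntropyPosPart_add
        (absolutelyContinuous_of_relEntropy_le h) ht.le E).trans
        (by gcongr; exact relEntropyPosPart_le_of_relEntropy_le h)
    _ ≤ ENNReal.ofReal (C + 1) +
        ENNReal.ofReal (Real.exp t) * ENNReal.ofReal ((C + 1) * Real.exp (-t)) := by gcongr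
    _ = ENNReal.ofReal t * ENNReal.ofReal ε := by
      rw [← ENNReal.ofReal_mul (Real.exp_pos t).le, ← ENNReal.ofReal_add (by positivity)
        (by positivity), ← ENNReal.ofReal_mul ht.le, mul_left_comm, ← Real.exp_add]
      congr 1
      simp only [t, add_neg_cancel, Real.exp_zero]
      field_simp
      ring
  exact (ENNReal.mul_le_mul_iff_right (by simpa using ht) ENNReal.ofReal_ne_top).mp key

end RelEntropy

lemma isTightMeasureSet_setOf_relEntropy_le {Y : Type*} [TopologicalSpace Y] [MeasurableSpace Y]
    {S : Set (Measure Y)} (hS : IsTightMeasureSet S) (hprob : ∀ m ∈ S, IsProbabilityMeasure m)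
    {C : ℝ} (hC : 0 ≤ C) :
    IsTightMeasureSet {μ : Measure Y | SigmaFinite μ ∧ ∃ m ∈ S, relEntropy m μ ≤ C} := by
  rw [isTightMeasureSet_iff_exists_isCompact_measure_compl_le] at hS ⊢
  intro ε hε
  obtain ⟨ε', hε', hε'ε⟩ := ENNReal.lt_iff_exists_nnreal_btwn.mp hε
  obtain ⟨K, hK, hSK⟩ := hS _ (ENNReal.ofReal_pos.mpr
    (by positivity : 0 < (C + 1) * Real.exp (-(2 * (C + 1) / ε'))))
  refine ⟨K, hK, fun μ ⟨_, m, hm, hμ⟩ => ?_⟩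
  have := hprob m hm
  calc μ Kᶜ ≤ ENNReal.ofReal ε' :=
        measure_le_of_relEntropy_le hμ hC (by simpa using hε') (hSK m hm)
    _ ≤ ε := by simpa using hε'ε.le

lemma isTightMeasureSet_range_of_tendsto {Y : Type*} [PseudoMetricSpace Y] [CompleteSpace Y]
    [SecondCountableTopology Y] [MeasurableSpace Y] [BorelSpace Y]
    {μ : ℕ → ProbabilityMeasure Y} {ν : ProbabilityMeasure Y} (h : Tendsto μ atTop (𝓝 ν)) :
    IsTightMeasureSet (range fun n => (μ n : Measure Y)) := by
  have hK := h.isCompact_insert_range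
  refine (isTightMeasureSet_of_isCompact_closure (hK.isClosed.closure_eq ▸ hK)).subset ?_
  rintro _ ⟨n, rfl⟩
  exact ⟨μ n, mem_insert_of_mem _ (mem_range_self n), rfl⟩

/-- Tightness of entropy sublevel sets along a weakly converging sequence of reference
probability measures: if `m_n ⇀ m_∞` on a complete separable metric space, then for every
`C > 0` the union over `n` of the sublevel sets `{μ : Ent_{m_n}(μ) ≤ C}` is tight. -/
theorem tight_of_relEntropy_le {Y : Type*} [MetricSpace Y] [CompleteSpace Y]
    [TopologicalSpace.SeparableSpace Y] [MeasurableSpace Y] [BorelSpace Y]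
    (m : ℕ → Measure Y) (minf : Measure Y)
    (hm : ∀ n, IsProbabilityMeasure (m n)) (hminf : IsProbabilityMeasure minf)
    (hconv : ∀ φ : BoundedContinuousFunction Y ℝ,
      Tendsto (fun n => ∫ x, φ x ∂(m n)) atTop (𝓝 (∫ x, φ x ∂minf)))
    (C : ℝ) (hC : 0 < C) :
    ∀ ε : ℝ, 0 < ε → ∃ K : Set Y, IsCompact K ∧
      ∀ (n : ℕ) (μ : Measure Y), IsProbabilityMeasure μ → relEntropy (m n) μ ≤ (C : EReal) →
        μ Kᶜ ≤ ENNReal.ofReal ε := by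
  intro ε hε
  have hweak : Tendsto (β := ProbabilityMeasure Y) (fun n => ⟨m n, hm n⟩) atTop
      (𝓝 ⟨minf, hminf⟩) :=
    ProbabilityMeasure.tendsto_iff_forall_integral_tendsto.mpr hconv
  have htight := isTightMeasureSet_setOf_relEntropy_le
    (isTightMeasureSet_range_of_tendsto hweak) (by rintro _ ⟨n, rfl⟩; exact hm n) hC.le
  obtain ⟨K, hK, hμK⟩ :=
    isTightMeasureSet_iff_exists_isCompact_measure_compl_le.mp htight _
      (ENNReal.ofReal_pos.mpr hε)
  exact ⟨K, hK, fun n μ _ hμ => hμK μ ⟨inferInstance, m n, mem_range_self n, hμ⟩⟩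
end

section
/- Let E : X → ℝ ∪ {+∞} be K-geodesically convex on a metric space. Then the descending slope admits the representation |∂⁻E|(x) = sup_{y ≠ x} ( E(x) − E(y) + (K/2) d²(x,y) )⁺ / d(x,y) for every x ∈ D(E). -/
/-!
The inequality `≥` comes from the geodesic: along a geodesic `γ` from `x` to `y`, convexity
bounds the difference quotient `(E x - E (γ t)) / d(x, γ t)` below by
`(E x - E y + (K/2)(1 - t) d²(x, y)) / d(x, y)`, which tends to the `y`-th term of the supremum
as `γ t → x`. The inequality `≤` is elementary: each difference quotient at `y` exceeds the
`y`-th term by at most `(|K|/2) d(x, y)`, which vanishes as `y → x`.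
-/

open Filter Topology MeasureTheory Set Metric
open scoped ENNReal NNReal

open Classical in
/-- The descending slope `|∂⁻E|(x) = limsup_{y→x} (E(y)−E(x))⁻ / d(x,y)` of a functional
(valued in `ℝ ∪ {+∞}`), set to `+∞` outside the effective domain. -/
noncomputable def descendingSlope {X : Type*} [MetricSpace X] (E : X → EReal) (x : X) : ℝ≥0∞ :=
  if E x = ⊤ then ⊤
  else Filter.limsup (fun y => ENNReal.ofReal ((E x - E y).toReal / dist x y)) (𝓝[≠] x)

/-- `E` is `K`-geodesically convex: any two points of the effective domain are joined by a
constant-speed geodesic along which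
`E(γ_t) ≤ (1−t)E(γ_0) + tE(γ_1) − (K/2)t(1−t)d²(γ_0,γ_1)`. -/
def KGeodConvex {X : Type*} [MetricSpace X] (K : ℝ) (E : X → EReal) : Prop :=
  ∀ x y : X, E x ≠ ⊤ → E y ≠ ⊤ → ∃ γ : ℝ → X, γ 0 = x ∧ γ 1 = y ∧
    (∀ t ∈ Icc (0:ℝ) 1, ∀ s ∈ Icc (0:ℝ) 1, dist (γ t) (γ s) = |s - t| * dist x y) ∧
    ∀ t ∈ Icc (0:ℝ) 1,
      E (γ t) ≤ ((1 - t : ℝ) : EReal) * E x + (t : EReal) * E y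
        - (((K / 2) * t * (1 - t) * dist x y ^ 2 : ℝ) : EReal)

theorem le_limsup_of_tendsto_of_le_comp {α β δ : Type*} [CompleteLinearOrder δ]
    [TopologicalSpace δ] [OrderTopology δ] {l : Filter α} [l.NeBot] {l' : Filter β}
    {φ : α → β} {f : β → δ} {g : α → δ} {L : δ} (hφ : Tendsto φ l l')
    (hg : Tendsto g l (𝓝 L)) (hle : ∀ᶠ t in l, g t ≤ f (φ t)) : L ≤ limsup f l' :=
  hg.limsup_eq ▸ (limsup_le_limsup hle).trans hφ.limsup_comp_le_limsup

section PseudoMetric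

variable {X : Type*} [PseudoMetricSpace X]

theorem limsup_nhdsNE_le_of_le_add_dist {f : X → ℝ≥0∞} {x : X} {S : ℝ≥0∞} (C : ℝ)
    (h : ∀ y ≠ x, f y ≤ S + ENNReal.ofReal (C * dist x y)) : limsup f (𝓝[≠] x) ≤ S := by
  rcases (𝓝[≠] x).eq_or_neBot with hbot | _
  · simp [hbot]
  have hdist : Tendsto (fun y => C * dist x y) (𝓝[≠] x) (𝓝 0) := by
    have : Continuous fun y => C * dist x y := by fun_prop
    simpa using (this.tendsto x).mono_left nhdsWithin_le_nhds
  have hlim : Tendsto (fun y => S + ENNReal.ofReal (C * dist x y)) (𝓝[≠] x) (𝓝 S) := by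
    simpa using (ENNReal.tendsto_ofReal hdist).const_add S
  calc limsup f (𝓝[≠] x) ≤ limsup (fun y => S + ENNReal.ofReal (C * dist x y)) (𝓝[≠] x) :=
        limsup_le_limsup (eventually_nhdsWithin_of_forall h)
    _ = S := hlim.limsup_eq

theorem tendsto_nhdsGT_nhdsNE_of_dist_eq_mul {γ : ℝ → X} {x : X} {d : ℝ} (hd : 0 < d)
    (h : ∀ t ∈ Ioo (0 : ℝ) 1, dist (γ t) x = t * d) : Tendsto γ (𝓝[>] 0) (𝓝[≠] x) := by
  have hIoo : Ioo (0 : ℝ) 1 ∈ 𝓝[>] (0 : ℝ) := Ioo_mem_nhdsGT one_pos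
  refine tendsto_nhdsWithin_iff.2 ⟨tendsto_iff_dist_tendsto_zero.2 ?_, ?_⟩
  · have : Tendsto (fun t : ℝ => t * d) (𝓝[>] 0) (𝓝 0) := by
      simpa using ((continuous_mul_const d).tendsto 0).mono_left nhdsWithin_le_nhds
    exact this.congr' (eventually_of_mem hIoo fun t ht => (h t ht).symm)
  · filter_upwards [hIoo] with t ht htx
    have := h t ht
    rw [htx, dist_self] at this
    exact (mul_pos ht.1 hd).ne this

end PseudoMetric

theorem EReal.sub_le_toReal_coe_sub {a c : ℝ} {z : EReal} (hz : z ≠ ⊥) (h : z ≤ c) :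
    a - c ≤ ((a : EReal) - z).toReal := by
  induction z using EReal.rec with
  | bot => exact absurd rfl hz
  | coe b =>
    rw [← EReal.coe_sub, EReal.toReal_coe]
    linarith [EReal.coe_le_coe_iff.1 h]
  | top => exact absurd h (by simp)

theorem ofReal_toReal_coe_sub_div_le (K : ℝ) {a d : ℝ} {z : EReal} (hz : z ≠ ⊥) (hd : 0 < d) :
    ENNReal.ofReal (((a : EReal) - z).toReal / d) ≤
      ENNReal.ofReal (((a : EReal) - z + ((K / 2 * d ^ 2 : ℝ) : EReal)).toReal / d) +
        ENNReal.ofReal (|K| / 2 * d) := by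
  induction z using EReal.rec with
  | bot => exact absurd rfl hz
  | coe b =>
    rw [← EReal.coe_sub, ← EReal.coe_add, EReal.toReal_coe, EReal.toReal_coe]
    refine (ENNReal.ofReal_le_ofReal ?_).trans ENNReal.ofReal_add_le
    have : K / 2 * d ^ 2 / d = K / 2 * d := by field_simp
    rw [add_div, this]
    nlinarith [neg_abs_le K]
  | top => simp

section KGeodConvex

variable {X : Type*} [MetricSpace X] {K : ℝ} {E : X → EReal}

theorem KGeodConvex.exists_tendsto_quotient_ge (hconv : KGeodConvex K E) (hbot : ∀ z, E z ≠ ⊥)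
    {x y : X} {a b : ℝ} (ha : E x = a) (hb : E y = b) (hxy : x ≠ y) :
    ∃ γ : ℝ → X, Tendsto γ (𝓝[>] 0) (𝓝[≠] x) ∧ ∀ t ∈ Ioo (0 : ℝ) 1,
      (a - b + K / 2 * (1 - t) * dist x y ^ 2) / dist x y ≤
        (E x - E (γ t)).toReal / dist x (γ t) := by
  obtain ⟨γ, hγ0, -, hγdist, hγE⟩ :=
    hconv x y (ha ▸ EReal.coe_ne_top a) (hb ▸ EReal.coe_ne_top b)
  have hd : 0 < dist x y := dist_pos.2 hxy
  have hdist : ∀ t ∈ Ioo (0 : ℝ) 1, dist (γ t) x = t * dist x y := fun t ht => by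
    simpa [hγ0, abs_of_pos ht.1] using hγdist t ⟨ht.1.le, ht.2.le⟩ 0 ⟨le_rfl, zero_le_one⟩
  refine ⟨γ, tendsto_nhdsGT_nhdsNE_of_dist_eq_mul hd hdist, fun t ht => ?_⟩
  have hE := hγE t ⟨ht.1.le, ht.2.le⟩
  rw [ha, hb, ← EReal.coe_mul, ← EReal.coe_mul, ← EReal.coe_add, ← EReal.coe_sub] at hE
  rw [ha, dist_comm x (γ t), hdist t ht, le_div_iff₀ (mul_pos ht.1 hd)]
  refine le_trans (le_of_eq ?_) (EReal.sub_le_toReal_coe_sub (hbot _) hE)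
  field_simp
  ring

theorem KGeodConvex.le_limsup_quotient (hconv : KGeodConvex K E) (hbot : ∀ z, E z ≠ ⊥)
    {x y : X} {a : ℝ} (ha : E x = a) (hxy : y ≠ x) :
    ENNReal.ofReal ((E x - E y + ((K / 2 * dist x y ^ 2 : ℝ) : EReal)).toReal / dist x y) ≤
      limsup (fun z => ENNReal.ofReal ((E x - E z).toReal / dist x z)) (𝓝[≠] x) := by
  induction hy : E y using EReal.rec with
  | bot => exact absurd hy (hbot y)
  | top => simp [ha]
  | coe b =>
    obtain ⟨γ, hγ, hquot⟩ := hconv.exists_tendsto_quotient_ge hbot ha hy hxy.symm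
    refine le_limsup_of_tendsto_of_le_comp hγ (g := fun t =>
      ENNReal.ofReal ((a - b + K / 2 * (1 - t) * dist x y ^ 2) / dist x y)) ?_
      (eventually_of_mem (Ioo_mem_nhdsGT one_pos) fun t ht =>
        ENNReal.ofReal_le_ofReal (hquot t ht))
    rw [ha, ← EReal.coe_sub, ← EReal.coe_add, EReal.toReal_coe]
    refine ENNReal.tendsto_ofReal ?_
    have : Continuous fun t : ℝ => (a - b + K / 2 * (1 - t) * dist x y ^ 2) / dist x y := by
      fun_prop
    simpa using (this.tendsto 0).mono_left nhdsWithin_le_nhds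

end KGeodConvex

/-- Representation of the descending slope of a `K`-geodesically convex functional:
`|∂⁻E|(x) = sup_{y ≠ x} (E(x) − E(y) + (K/2)d²(x,y))⁺ / d(x,y)` for every `x ∈ D(E)`. -/
theorem descendingSlope_eq_sup_of_KGeodConvex {X : Type*} [MetricSpace X]
    (K : ℝ) (E : X → EReal) (hbot : ∀ x, E x ≠ ⊥) (hconv : KGeodConvex K E)
    (x : X) (hx : E x ≠ ⊤) :
    descendingSlope E x = ⨆ (y : X) (_ : y ≠ x),
      ENNReal.ofReal ((E x - E y + (((K / 2) * dist x y ^ 2 : ℝ) : EReal)).toReal / dist x y) := by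
  obtain ⟨a, ha⟩ : ∃ a : ℝ, E x = a := ⟨_, (EReal.coe_toReal hx (hbot x)).symm⟩
  rw [descendingSlope, if_neg hx]
  refine le_antisymm (limsup_nhdsNE_le_of_le_add_dist (|K| / 2) fun y hy => ?_)
    (iSup₂_le fun y hy => hconv.le_limsup_quotient hbot ha hy)
  rw [ha]
  refine (ofReal_toReal_coe_sub_div_le K (hbot y) (dist_pos.2 hy.symm)).trans ?_
  gcongr
  exact le_iSup₂_of_le y hy le_rfl
end

section
/- Let (E_n) be K-geodesically convex lower semicontinuous functionals on a metric space X, Γ-converging to a K-geodesically convex functional E_∞. Then for every x ∈ D(E_∞) and every sequence x_n → x, one has |∂⁻E_∞|(x) ≤ liminf_n |∂⁻E_n|(x_n); i.e., the slopes satisfy the Γ-liminf inequality on D(E_∞). -/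
/-! Along a geodesic from `x` to `y`, `K`-convexity bounds the difference quotients of `E` at `x`
from below by `(E x - E y) / d(x, y) + (K / 2) d(x, y)`, so this global quantity is a lower bound
for `|∂⁻E|(x)`. Applied to `E_n` at `u_n` and at a recovery sequence `v_n → y`, the Γ-liminf
inequality at `x` and the Γ-limsup inequality at `y` carry the bound to the limit:
`(E∞ x - E∞ y) / d(x, y) + (K / 2) d(x, y) ≤ liminf |∂⁻E_n|(u_n)` for every `y ≠ x`. As `y → x`
the term `(K / 2) d(x, y)` vanishes, and what remains bounds the limsup defining `|∂⁻E∞|(x)`. -/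

open Filter Topology MeasureTheory Set Metric
open scoped ENNReal NNReal

section

variable {X : Type*} [MetricSpace X]

theorem gammaLiminf_le_liminf {E : ℕ → X → EReal} {x : X} {u : ℕ → X}
    (hu : Tendsto u atTop (𝓝 x)) : gammaLiminf E x ≤ liminf (fun n => E n (u n)) atTop :=
  iInf₂_le u hu

theorem exists_tendsto_limsup_lt_of_gammaLimsup_lt {E : ℕ → X → EReal} {x : X} {c : EReal}
    (h : gammaLimsup E x < c) :
    ∃ v : ℕ → X, Tendsto v atTop (𝓝 x) ∧ limsup (fun n => E n (v n)) atTop < c := by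
  simpa only [gammaLimsup, iInf_lt_iff, exists_prop] using h

theorem descendingSlope_le_of_forall_ofReal_le {K : ℝ} {E : X → EReal} {x : X} {L : ℝ≥0∞}
    (hbot : ∀ z, E z ≠ ⊥) (hx : E x ≠ ⊤)
    (h : ∀ y ≠ x, E y ≠ ⊤ →
      ENNReal.ofReal (((E x).toReal - (E y).toReal) / dist x y + K / 2 * dist x y) ≤ L) :
    descendingSlope E x ≤ L := by
  rcases (𝓝[≠] x).eq_or_neBot with hbotx | _
  · simp [descendingSlope, hx, hbotx]
  have hvanish : Tendsto (fun y => ENNReal.ofReal (|K| / 2 * dist x y)) (𝓝[≠] x) (𝓝 0) := by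
    have : Tendsto (fun y => |K| / 2 * dist x y) (𝓝 x) (𝓝 (|K| / 2 * dist x x)) :=
      ((continuous_const.dist continuous_id).const_mul _).tendsto x
    simpa using (ENNReal.tendsto_ofReal this).mono_left nhdsWithin_le_nhds
  have hbound : ∀ᶠ y in 𝓝[≠] x, ENNReal.ofReal ((E x - E y).toReal / dist x y)
      ≤ L + ENNReal.ofReal (|K| / 2 * dist x y) := by
    filter_upwards [self_mem_nhdsWithin] with y (hyx : y ≠ x)
    by_cases hy : E y = ⊤
    -- the quotient is `(E x - ⊤).toReal / d = (⊥ : EReal).toReal / d = 0`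
    · simp [hy, EReal.sub_top]
    rw [EReal.toReal_sub hx (hbot x) hy (hbot y)]
    calc _ ≤ ENNReal.ofReal ((((E x).toReal - (E y).toReal) / dist x y + K / 2 * dist x y)
            + |K| / 2 * dist x y) :=
          ENNReal.ofReal_le_ofReal (by nlinarith [neg_abs_le K, dist_nonneg (x := x) (y := y)])
      _ ≤ _ := ENNReal.ofReal_add_le.trans (add_le_add_left (h y hyx hy) _)
  rw [descendingSlope, if_neg hx]
  calc _ ≤ limsup (fun y => L + ENNReal.ofReal (|K| / 2 * dist x y)) (𝓝[≠] x) :=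
        limsup_le_limsup hbound
    _ = L := by simpa using (tendsto_const_nhds.add hvanish).limsup_eq

theorem ofReal_le_descendingSlope_of_tendsto {ι : Type*} {l : Filter ι} [l.NeBot]
    {E : X → EReal} {x : X} (hx : E x ≠ ⊤) {z : ι → X} (hz : Tendsto z l (𝓝[≠] x))
    {w : ι → ℝ} {c : ℝ} (hw : Tendsto w l (𝓝 c))
    (hwz : ∀ᶠ i in l, w i ≤ (E x - E (z i)).toReal / dist x (z i)) :
    ENNReal.ofReal c ≤ descendingSlope E x := by
  set f : X → ℝ≥0∞ := fun y => ENNReal.ofReal ((E x - E y).toReal / dist x y)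
  rw [descendingSlope, if_neg hx]
  calc ENNReal.ofReal c = liminf (fun i => ENNReal.ofReal (w i)) l :=
        (ENNReal.tendsto_ofReal hw).liminf_eq.symm
    _ ≤ liminf (f ∘ z) l := liminf_le_liminf (hwz.mono fun i hi => ENNReal.ofReal_le_ofReal hi)
    _ ≤ limsup (f ∘ z) l := liminf_le_limsup
    _ ≤ limsup f (𝓝[≠] x) := by rw [limsup_comp]; exact limsup_le_limsup_of_le hz

theorem KGeodConvex.ofReal_le_descendingSlope {K : ℝ} {E : X → EReal} (hK : KGeodConvex K E)
    (hbot : ∀ z, E z ≠ ⊥) {x y : X} (hx : E x ≠ ⊤) (hy : E y ≠ ⊤) (hxy : x ≠ y) :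
    ENNReal.ofReal (((E x).toReal - (E y).toReal) / dist x y + K / 2 * dist x y)
      ≤ descendingSlope E x := by
  obtain ⟨γ, hγ0, -, hγd, hγE⟩ := hK x y hx hy
  set a := (E x).toReal
  set b := (E y).toReal
  set d := dist x y
  have hd : 0 < d := dist_pos.2 hxy
  have hdist : ∀ t ∈ Icc (0 : ℝ) 1, dist x (γ t) = t * d := fun t ht => by
    simpa [hγ0, abs_of_nonneg ht.1] using hγd 0 (left_mem_Icc.2 zero_le_one) t ht
  have hunit : ∀ᶠ t in 𝓝[>] (0 : ℝ), t ∈ Ioo (0 : ℝ) 1 := Ioo_mem_nhdsGT zero_lt_one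
  refine ofReal_le_descendingSlope_of_tendsto hx (l := 𝓝[>] 0) (z := γ)
    (w := fun t => (a - b) / d + K / 2 * (1 - t) * d) ?_ ?_ ?_
  · refine tendsto_nhdsWithin_iff.2 ⟨?_, ?_⟩
    · have : Tendsto (fun t : ℝ => t * d) (𝓝 0) (𝓝 (0 * d)) := tendsto_id.mul_const d
      rw [zero_mul] at this
      refine tendsto_iff_dist_tendsto_zero.2 ((this.mono_left nhdsWithin_le_nhds).congr' ?_)
      filter_upwards [hunit] with t ht
      rw [dist_comm, hdist t (Ioo_subset_Icc_self ht)]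
    · filter_upwards [hunit] with t ht hγx
      have := hdist t (Ioo_subset_Icc_self ht)
      rw [hγx, dist_self] at this
      nlinarith [ht.1]
  · have : Continuous fun t : ℝ => (a - b) / d + K / 2 * (1 - t) * d := by fun_prop
    simpa using (this.tendsto 0).mono_left nhdsWithin_le_nhds
  · filter_upwards [hunit] with t ht
    have ht' := Ioo_subset_Icc_self ht
    have hconv := hγE t ht'
    rw [← EReal.coe_toReal hx (hbot x), ← EReal.coe_toReal hy (hbot y), ← EReal.coe_mul,
      ← EReal.coe_mul, ← EReal.coe_add, ← EReal.coe_sub] at hconv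
    have hγt : E (γ t) ≠ ⊤ := ne_top_of_le_ne_top (EReal.coe_ne_top _) hconv
    have hle := EReal.toReal_le_toReal hconv (hbot _) (EReal.coe_ne_top _)
    rw [EReal.toReal_coe] at hle
    have hquot : ((a - b) / d + K / 2 * (1 - t) * d) * (t * d)
        = t * (a - b) + K / 2 * t * (1 - t) * d ^ 2 := by
      field_simp
    rw [EReal.toReal_sub hx (hbot x) hγt (hbot _), hdist t ht',
      le_div_iff₀ (mul_pos ht.1 hd), hquot]
    linarith

theorem ofReal_le_liminf_descendingSlope {K : ℝ} {E : ℕ → X → EReal}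
    (hK : ∀ n, KGeodConvex K (E n)) (hbot : ∀ n z, E n z ≠ ⊥) {x y : X} (hxy : x ≠ y)
    {u v : ℕ → X} (hu : Tendsto u atTop (𝓝 x)) (hv : Tendsto v atTop (𝓝 y)) {a b : ℝ}
    (ha : ∀ᶠ n in atTop, (a : EReal) ≤ E n (u n)) (hb : ∀ᶠ n in atTop, E n (v n) ≤ b) :
    ENNReal.ofReal ((a - b) / dist x y + K / 2 * dist x y)
      ≤ liminf (fun n => descendingSlope (E n) (u n)) atTop := by
  have hd : Tendsto (fun n => dist (u n) (v n)) atTop (𝓝 (dist x y)) := hu.dist hv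
  have hd0 : 0 < dist x y := dist_pos.2 hxy
  have hlim : Tendsto (fun n => ENNReal.ofReal ((a - b) / dist (u n) (v n)
      + K / 2 * dist (u n) (v n))) atTop
      (𝓝 (ENNReal.ofReal ((a - b) / dist x y + K / 2 * dist x y))) :=
    ENNReal.tendsto_ofReal ((tendsto_const_nhds.div hd hd0.ne').add (hd.const_mul _))
  rw [← hlim.liminf_eq]
  refine liminf_le_liminf ?_
  filter_upwards [ha, hb, hd.eventually (eventually_gt_nhds hd0)] with n han hbn hdn
  by_cases hun : E n (u n) = ⊤
  · simp [descendingSlope, hun]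
  have hvn : E n (v n) ≠ ⊤ := ne_top_of_le_ne_top (EReal.coe_ne_top b) hbn
  have han' := EReal.toReal_le_toReal han (EReal.coe_ne_bot a) hun
  have hbn' := EReal.toReal_le_toReal hbn (hbot n _) (EReal.coe_ne_top b)
  rw [EReal.toReal_coe] at han' hbn'
  refine le_trans (ENNReal.ofReal_le_ofReal ?_)
    ((hK n).ofReal_le_descendingSlope (hbot n) hun hvn (dist_pos.1 hdn))
  gcongr

theorem ofReal_le_liminf_descendingSlope_of_gamma {K : ℝ} {E : ℕ → X → EReal}
    (hK : ∀ n, KGeodConvex K (E n)) (hbot : ∀ n z, E n z ≠ ⊥) {x y : X} (hxy : x ≠ y)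
    {u : ℕ → X} (hu : Tendsto u atTop (𝓝 x)) {a b : ℝ}
    (ha : (a : EReal) ≤ gammaLiminf E x) (hb : gammaLimsup E y ≤ b) :
    ENNReal.ofReal ((a - b) / dist x y + K / 2 * dist x y)
      ≤ liminf (fun n => descendingSlope (E n) (u n)) atTop := by
  have hd0 : 0 < dist x y := dist_pos.2 hxy
  set r := (a - b) / dist x y + K / 2 * dist x y
  have hlt : ∀ c < r,
      ENNReal.ofReal c ≤ liminf (fun n => descendingSlope (E n) (u n)) atTop := by
    intro c hc
    set ε := (r - c) * dist x y / 2
    have hε : 0 < ε := by have := sub_pos.2 hc; positivity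
    obtain ⟨v, hv, hvb⟩ := exists_tendsto_limsup_lt_of_gammaLimsup_lt
      (hb.trans_lt (EReal.coe_lt_coe_iff.2 (lt_add_of_pos_right b hε)))
    have hua : ∀ᶠ n in atTop, ((a - ε : ℝ) : EReal) ≤ E n (u n) :=
      (eventually_lt_of_lt_liminf ((EReal.coe_lt_coe_iff.2 (sub_lt_self a hε)).trans_le
        (ha.trans (gammaLiminf_le_liminf hu)))).mono fun _ => le_of_lt
    convert ofReal_le_liminf_descendingSlope hK hbot hxy hu hv hua
      ((eventually_lt_of_limsup_lt hvb).mono fun _ => le_of_lt) using 2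
    simp only [ε, r]
    field_simp
    ring
  have hcont : Tendsto ENNReal.ofReal (𝓝[<] r) (𝓝 (ENNReal.ofReal r)) :=
    (ENNReal.continuous_ofReal.tendsto r).mono_left nhdsWithin_le_nhds
  exact le_of_tendsto hcont (eventually_nhdsWithin_of_forall hlt)

end

theorem descendingSlope_gammaLiminf_general {X : Type*} [MetricSpace X] (K : ℝ)
    (E : ℕ → X → EReal) (Einf : X → EReal)
    (hbot : ∀ n x, E n x ≠ ⊥) (hbotinf : ∀ x, Einf x ≠ ⊥)
    (hKconv : ∀ n, KGeodConvex K (E n))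
    (hgamma : gammaLiminf E = Einf ∧ gammaLimsup E = Einf)
    (x : X) (hx : Einf x ≠ ⊤) (u : ℕ → X) (hu : Tendsto u atTop (𝓝 x)) :
    descendingSlope Einf x ≤ Filter.liminf (fun n => descendingSlope (E n) (u n)) atTop := by
  obtain ⟨hliminf, hlimsup⟩ := hgamma
  refine descendingSlope_le_of_forall_ofReal_le (K := K) hbotinf hx fun y hyx hy => ?_
  refine ofReal_le_liminf_descendingSlope_of_gamma hKconv hbot hyx.symm hu ?_ ?_
  · rw [hliminf, EReal.coe_toReal hx (hbotinf x)]
  · rw [hlimsup, EReal.coe_toReal hy (hbotinf y)]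

/-- Γ-liminf inequality for the descending slopes: if `K`-geodesically convex lower
semicontinuous functionals `E_n` Γ-converge to the `K`-geodesically convex functional `E∞`,
then for every `x ∈ D(E∞)` and every `x_n → x` one has
`|∂⁻E∞|(x) ≤ liminf_n |∂⁻E_n|(x_n)`. -/
theorem descendingSlope_gammaLiminf {X : Type*} [MetricSpace X] (K : ℝ)
    (E : ℕ → X → EReal) (Einf : X → EReal)
    (hbot : ∀ n x, E n x ≠ ⊥) (hbotinf : ∀ x, Einf x ≠ ⊥)
    (hKconv : ∀ n, KGeodConvex K (E n)) (hlsc : ∀ n, LowerSemicontinuous (E n))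
    (hKconvinf : KGeodConvex K Einf)
    (hgamma : gammaLiminf E = Einf ∧ gammaLimsup E = Einf)
    (x : X) (hx : Einf x ≠ ⊤) (u : ℕ → X) (hu : Tendsto u atTop (𝓝 x)) :
    descendingSlope Einf x ≤ Filter.liminf (fun n => descendingSlope (E n) (u n)) atTop :=
  descendingSlope_gammaLiminf_general K E Einf hbot hbotinf hKconv hgamma x hx u hu
end
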